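/- arXiv:0710.0070 — 5 statements merged into one kernel-verified Lean document; each statement's English description precedes it below -/
import Mathlib

section
/- Let S be a Lie algebra over a field K and V a Lie module over S that is semisimple (a direct sum of irreducible Lie submodules). Let V^S = {v ∈ V : s • v = 0 for all s ∈ S} and let S·V be the K-span of all elements s • v with s ∈ S, v ∈ V. Then V is the internal direct sum of the Lie submodules V^S and S·V, i.e. V = V^S ⊕ S·V. -/
/-!
If `W` complements `⁅S, V⁆`, then `⁅S, W⁆ ⊆ ⁅S, V⁆ ∩ W = 0`, so `W` consists of invariants and
`V^S + ⁅S, V⁆ = V`. If `D` complements `V^S`, then `⁅S, V⁆ = ⁅S, V^S + D⁆ = ⁅S, D⁆ ⊆ D`, so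
`⁅S, V⁆` meets `V^S` trivially.
-/

namespace LieModule

open LieSubmodule

variable {R L M : Type*} [CommRing R] [LieRing L] [LieAlgebra R L]
  [AddCommGroup M] [Module R M] [LieRingModule L M] [LieModule R L M]

lemma le_maxTrivSubmodule_of_disjoint_lie_top {N : LieSubmodule R L M}
    (h : Disjoint ⁅(⊤ : LieIdeal R L), (⊤ : LieSubmodule R L M)⁆ N) :
    N ≤ maxTrivSubmodule R L M := by
  rw [le_max_triv_iff_bracket_eq_bot, ← le_bot_iff]
  exact (le_inf (mono_lie_right ⊤ le_top) (lie_le_right N ⊤)).trans h.le_bot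

lemma lie_top_le_of_codisjoint_maxTrivSubmodule {N : LieSubmodule R L M}
    (h : Codisjoint (maxTrivSubmodule R L M) N) :
    ⁅(⊤ : LieIdeal R L), (⊤ : LieSubmodule R L M)⁆ ≤ N := by
  rw [← h.eq_top, lie_sup, ideal_oper_maxTrivSubmodule_eq_bot, bot_sup_eq]
  exact lie_le_right N ⊤

theorem isCompl_maxTrivSubmodule_lie_top [ComplementedLattice (LieSubmodule R L M)] :
    IsCompl (maxTrivSubmodule R L M) ⁅(⊤ : LieIdeal R L), (⊤ : LieSubmodule R L M)⁆ := by
  obtain ⟨D, hD⟩ := exists_isCompl (maxTrivSubmodule R L M)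
  obtain ⟨W, hW⟩ := exists_isCompl ⁅(⊤ : LieIdeal R L), (⊤ : LieSubmodule R L M)⁆
  exact ⟨hD.disjoint.mono_right (lie_top_le_of_codisjoint_maxTrivSubmodule hD.codisjoint),
    (hW.codisjoint.mono_right (le_maxTrivSubmodule_of_disjoint_lie_top hW.disjoint)).symm⟩

lemma toSubmodule_lie_top_eq_span :
    (⁅(⊤ : LieIdeal R L), (⊤ : LieSubmodule R L M)⁆ : LieSubmodule R L M).toSubmodule =
      Submodule.span R {z : M | ∃ (x : L) (m : M), z = ⁅x, m⁆} := by
  rw [lieIdeal_oper_eq_linear_span']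
  congr
  ext z
  simp [eq_comm]

end LieModule

/-- Let `S` be a Lie algebra over a field `K` and `V` a semisimple Lie module over `S`
(every Lie submodule has a complement).  Let `V^S` be the submodule of invariants and
`S·V` the span of all `⁅s, v⁆`.  Then `V = V^S ⊕ S·V` as an internal direct sum. -/
theorem semisimple_module_eq_invariants_sup_span
    {K S V : Type*} [Field K] [LieRing S] [LieAlgebra K S]
    [AddCommGroup V] [Module K V] [LieRingModule S V] [LieModule K S V]
    (hss : ∀ W : LieSubmodule K S V, ∃ W' : LieSubmodule K S V, IsCompl W W') :
    IsCompl (LieModule.maxTrivSubmodule K S V).toSubmodule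
      (Submodule.span K {z : V | ∃ (s : S) (v : V), z = ⁅s, v⁆}) := by
  have : ComplementedLattice (LieSubmodule K S V) := ⟨hss⟩
  rw [← LieModule.toSubmodule_lie_top_eq_span, LieSubmodule.isCompl_toSubmodule]
  exact LieModule.isCompl_maxTrivSubmodule_lie_top
end

section
/- Let K be a field of characteristic zero, L a finite-dimensional Lie algebra over K, S a semisimple Lie subalgebra of L, and R the radical of L, with L = S ⊕ R as K-vector spaces (a Levi decomposition). Assume R is abelian and that R, viewed as a Lie module over S via the adjoint action, is a semisimple S-module. Let R^S = {v ∈ R : ⁅s, v⁆ = 0 for all s ∈ S} and let I = S + ⁅S, R⁆ (the K-span of S together with all brackets ⁅s, r⁆, s ∈ S, r ∈ R). Then: (i) I is a Lie ideal of L; (ii) I is perfect, i.e. ⁅I, I⁆ = I; (iii) R^S is contained in the center of L; and (iv) L = I ⊕ R^S as K-vector spaces. In particular, L is the direct sum of a perfect ideal and a central abelian ideal. -/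
-- Perfectness of a semisimple Lie algebra
lemma aux_semisimple_perfect (K S : Type*) [Field K] [LieRing S] [LieAlgebra K S]
    [LieAlgebra.IsSemisimple K S] :
    (⁅(⊤ : LieIdeal K S), (⊤ : LieIdeal K S)⁆ : LieIdeal K S) = ⊤ := by
  set D : LieIdeal K S := ⁅(⊤ : LieIdeal K S), (⊤ : LieIdeal K S)⁆ with hD
  have hC : IsLieAbelian (↥(Dᶜ : LieIdeal K S)) := by
    rw [LieSubmodule.lie_abelian_iff_lie_self_eq_bot]
    have h1 : (⁅(Dᶜ : LieIdeal K S), (Dᶜ : LieIdeal K S)⁆ : LieIdeal K S) ≤ D :=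
      LieSubmodule.mono_lie le_top le_top
    have h2 : (⁅(Dᶜ : LieIdeal K S), (Dᶜ : LieIdeal K S)⁆ : LieIdeal K S) ≤ Dᶜ :=
      LieSubmodule.lie_le_right _ _
    have h3 : D ⊓ Dᶜ = ⊥ := inf_compl_eq_bot
    exact le_bot_iff.1 (h3 ▸ le_inf h1 h2)
  have hbot : (Dᶜ : LieIdeal K S) = ⊥ :=
    (LieAlgebra.hasTrivialRadical_iff_no_abelian_ideals K S).1 inferInstance Dᶜ hC
  rwa [compl_eq_bot] at hbot

/-- Levi decomposition `L = S ⊕ R` with `R` the (abelian) radical, semisimple as an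
`S`-module under the adjoint action.  With `R^S` the invariants and `I = S + ⁅S, R⁆`:
(i) `I` is an ideal of `L`; (ii) `I` is perfect; (iii) `R^S` is central in `L`;
(iv) `L = I ⊕ R^S` as vector spaces. -/
theorem direct_sum_perfect_ideal_central_of_abelian_radical
    {K L : Type*} [Field K] [CharZero K] [LieRing L] [LieAlgebra K L]
    [FiniteDimensional K L]
    (S : LieSubalgebra K L) (hS : LieAlgebra.IsSemisimple K S)
    (R : LieIdeal K L) (hR : R = LieAlgebra.radical K L)
    (hLevi : IsCompl S.toSubmodule R.toSubmodule)
    (hab : ∀ x ∈ R, ∀ y ∈ R, ⁅x, y⁆ = 0)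
    (hss : ∀ W : Submodule K L, W ≤ R.toSubmodule →
      (∀ s ∈ S, ∀ w ∈ W, ⁅s, w⁆ ∈ W) →
      ∃ W' : Submodule K L, W' ≤ R.toSubmodule ∧
        (∀ s ∈ S, ∀ w ∈ W', ⁅s, w⁆ ∈ W') ∧
        Disjoint W W' ∧ W ⊔ W' = R.toSubmodule)
    (I : Submodule K L)
    (hI : I = S.toSubmodule ⊔ Submodule.span K {z : L | ∃ s ∈ S, ∃ r ∈ R, z = ⁅s, r⁆})
    (RS : Submodule K L)
    (hRS : RS = R.toSubmodule ⊓ ⨅ s : S, LinearMap.ker (LieAlgebra.ad K L (s : L))) :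
    (∀ x : L, ∀ y ∈ I, ⁅x, y⁆ ∈ I) ∧
    (Submodule.span K {z : L | ∃ x ∈ I, ∃ y ∈ I, z = ⁅x, y⁆} = I) ∧
    (∀ v ∈ RS, ∀ x : L, ⁅x, v⁆ = 0) ∧
    IsCompl I RS := by
  classical
  haveI := hS
  set SR : Submodule K L := Submodule.span K {z : L | ∃ s ∈ S, ∃ r ∈ R, z = ⁅s, r⁆}
    with hSRdef
  -- basic facts about SR
  have hSR_le : SR ≤ R.toSubmodule := by
    rw [hSRdef]
    apply Submodule.span_le.2
    rintro z ⟨s, hs, r, hr, rfl⟩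
    exact R.lie_mem hr
  have hSR_inv : ∀ s ∈ S, ∀ w ∈ SR, ⁅s, w⁆ ∈ SR := by
    intro s hs w hw
    rw [hSRdef] at hw ⊢
    induction hw using Submodule.span_induction with
    | mem z hz =>
      obtain ⟨t, ht, r, hr, rfl⟩ := hz
      rw [leibniz_lie]
      exact Submodule.add_mem _
        (Submodule.subset_span ⟨⁅s, t⁆, S.lie_mem hs ht, r, hr, rfl⟩)
        (Submodule.subset_span ⟨t, ht, ⁅s, r⁆, R.lie_mem hr, rfl⟩)
    | zero => simp
    | add x y hx hy ihx ihy => rw [lie_add]; exact Submodule.add_mem _ ihx ihy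
    | smul t x hx ih => rw [lie_smul]; exact Submodule.smul_mem _ t ih
  -- characterization of RS
  have hRS_mem : ∀ v : L, v ∈ RS ↔ v ∈ R ∧ ∀ s ∈ S, ⁅s, v⁆ = 0 := by
    intro v
    rw [hRS]
    constructor
    · rintro ⟨h1, h2⟩
      refine ⟨h1, fun s hs => ?_⟩
      have := (Submodule.mem_iInf _).1 h2 ⟨s, hs⟩
      simpa [LieAlgebra.ad_apply] using this
    · rintro ⟨h1, h2⟩
      refine ⟨h1, (Submodule.mem_iInf _).2 fun s => ?_⟩
      simpa [LieAlgebra.ad_apply] using h2 s s.2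
  have hRS_le_R : RS ≤ R.toSubmodule := by rw [hRS]; exact inf_le_left
  -- (iii) centrality
  have hcent : ∀ v ∈ RS, ∀ x : L, ⁅x, v⁆ = 0 := by
    intro v hv x
    obtain ⟨hvR, hvk⟩ := (hRS_mem v).1 hv
    have hx : x ∈ S.toSubmodule ⊔ R.toSubmodule := by
      rw [hLevi.codisjoint.eq_top]; trivial
    obtain ⟨a, ha, b, hb, rfl⟩ := Submodule.mem_sup.1 hx
    rw [add_lie, hvk a ha, hab b hb v hvR, add_zero]
  -- R = SR ⊔ RS
  obtain ⟨W', hW'le, hW'inv, hWdisj, hWsup⟩ := hss SR hSR_le hSR_inv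
  have hW'RS : W' ≤ RS := by
    intro w hw
    refine (hRS_mem w).2 ⟨hW'le hw, fun s hs => ?_⟩
    have h1 : ⁅s, w⁆ ∈ SR := by
      rw [hSRdef]; exact Submodule.subset_span ⟨s, hs, w, hW'le hw, rfl⟩
    have h2 : ⁅s, w⁆ ∈ W' := hW'inv s hs w hw
    simpa using hWdisj.le_bot ⟨h1, h2⟩
  have hRsup : SR ⊔ RS = R.toSubmodule := by
    refine le_antisymm (sup_le hSR_le hRS_le_R) ?_
    rw [← hWsup]
    exact sup_le_sup_left hW'RS SR
  -- SR ⊓ RS = ⊥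
  have hDinv : ∀ s ∈ S, ∀ w ∈ SR ⊓ RS, ⁅s, w⁆ ∈ SR ⊓ RS := by
    intro s hs w hw
    rw [((hRS_mem w).1 hw.2).2 s hs]
    exact Submodule.zero_mem _
  obtain ⟨D', hD'le, hD'inv, hDdisj, hDsup⟩ :=
    hss (SR ⊓ RS) (le_trans inf_le_left hSR_le) hDinv
  have hSRD' : SR ≤ D' := by
    rw [hSRdef]
    apply Submodule.span_le.2
    rintro z ⟨s, hs, r, hr, rfl⟩
    have hrmem : (r : L) ∈ (SR ⊓ RS) ⊔ D' := by rw [hDsup]; exact hr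
    obtain ⟨a, ha, b, hb, rfl⟩ := Submodule.mem_sup.1 hrmem
    rw [lie_add, ((hRS_mem a).1 ha.2).2 s hs, zero_add]
    exact hD'inv s hs b hb
  have hdisjSRRS : Disjoint SR RS := by
    rw [disjoint_iff, eq_bot_iff]
    intro x hx
    exact hDdisj.le_bot ⟨hx, hSRD' hx.1⟩
  -- (i) I is an ideal
  have hS_le_I : S.toSubmodule ≤ I := hI ▸ le_sup_left
  have hSR_le_I : SR ≤ I := by rw [hI]; exact le_sup_right
  have hideal : ∀ x : L, ∀ y ∈ I, ⁅x, y⁆ ∈ I := by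
    intro x y hy
    have hx : x ∈ S.toSubmodule ⊔ R.toSubmodule := by
      rw [hLevi.codisjoint.eq_top]; trivial
    obtain ⟨a, ha, b, hb, rfl⟩ := Submodule.mem_sup.1 hx
    rw [hI] at hy
    obtain ⟨u, hu, w, hw, rfl⟩ := Submodule.mem_sup.1 hy
    have h1 : ⁅a, u⁆ ∈ I := hS_le_I (S.lie_mem ha hu)
    have h2 : ⁅b, u⁆ ∈ I := by
      have : ⁅u, b⁆ ∈ SR := by
        rw [hSRdef]; exact Submodule.subset_span ⟨u, hu, b, hb, rfl⟩
      have := hSR_le_I this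
      rw [← lie_skew]
      exact Submodule.neg_mem _ this
    have h3 : ⁅a, w⁆ ∈ I := hSR_le_I (hSR_inv a ha w hw)
    have h4 : ⁅b, w⁆ = 0 := hab b hb w (hSR_le hw)
    rw [add_lie, lie_add, lie_add, h4, add_zero]
    exact Submodule.add_mem _ (Submodule.add_mem _ h1 h3) h2
  refine ⟨hideal, ?_, hcent, ?_⟩
  -- (ii) perfectness
  · set J : Submodule K L := Submodule.span K {z : L | ∃ x ∈ I, ∃ y ∈ I, z = ⁅x, y⁆}
      with hJdef
    refine le_antisymm ?_ ?_
    · rw [hJdef]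
      apply Submodule.span_le.2
      rintro z ⟨x, hx, y, hy, rfl⟩
      exact hideal x y hy
    · rw [hI]
      refine sup_le ?_ ?_
      · -- S ≤ J, via perfectness of S
        intro x hx
        have htop := aux_semisimple_perfect K S
        have hmem0 : (⟨x, hx⟩ : S) ∈
            (⁅(⊤ : LieIdeal K S), (⊤ : LieIdeal K S)⁆ : LieIdeal K S) := by
          rw [htop]; trivial
        have hmem : (⟨x, hx⟩ : S) ∈ Submodule.span K
            {m : S | ∃ a ∈ (⊤ : LieIdeal K S), ∃ b ∈ (⊤ : LieIdeal K S), ⁅a, b⁆ = m} := by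
          rw [← LieSubmodule.lieIdeal_oper_eq_linear_span']
          exact hmem0
        have key : ∀ (v : S), v ∈ Submodule.span K
            {m : S | ∃ a ∈ (⊤ : LieIdeal K S), ∃ b ∈ (⊤ : LieIdeal K S), ⁅a, b⁆ = m} →
            (v : L) ∈ J := by
          intro v hv
          induction hv using Submodule.span_induction with
          | mem z hz =>
            obtain ⟨a, -, b, -, rfl⟩ := hz
            rw [hJdef]
            exact Submodule.subset_span ⟨(a : L), hS_le_I a.2, (b : L), hS_le_I b.2, rfl⟩
          | zero => simp
          | add p q hp hq ihp ihq =>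
            rw [Submodule.coe_add]; exact Submodule.add_mem _ ihp ihq
          | smul t p hp ih =>
            have hc : ((t • p : S) : L) = t • (p : L) := rfl
            rw [hc]; exact Submodule.smul_mem _ t ih
        exact key _ hmem
      · -- SR ≤ J
        rw [hSRdef]
        apply Submodule.span_le.2
        rintro z ⟨s, hs, r, hr, rfl⟩
        have hrmem : (r : L) ∈ SR ⊔ RS := by rw [hRsup]; exact hr
        obtain ⟨w, hw, v, hv, rfl⟩ := Submodule.mem_sup.1 hrmem
        rw [lie_add, ((hRS_mem v).1 hv).2 s hs, add_zero]
        rw [hJdef]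
        exact Submodule.subset_span ⟨s, hS_le_I hs, w, hSR_le_I hw, rfl⟩
  -- (iv) IsCompl
  · constructor
    · rw [disjoint_iff, eq_bot_iff]
      intro x hx
      obtain ⟨hxI, hxRS⟩ := hx
      rw [hI] at hxI
      obtain ⟨u, hu, w, hw, huw⟩ := Submodule.mem_sup.1 hxI
      have hxR : x ∈ R.toSubmodule := hRS_le_R hxRS
      have huR : u ∈ R.toSubmodule := by
        have : u = x - w := by rw [← huw, add_sub_cancel_right]
        rw [this]
        exact Submodule.sub_mem _ hxR (hSR_le hw)
      have hu0 : u = 0 := by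
        simpa using hLevi.disjoint.le_bot ⟨hu, huR⟩
      have hxw : x = w := by rw [← huw, hu0, zero_add]
      have : x ∈ SR ⊓ RS := ⟨hxw ▸ hw, hxRS⟩
      simpa using hdisjSRRS.le_bot this
    · rw [codisjoint_iff, hI, sup_assoc, hRsup, hLevi.codisjoint.eq_top]
end

section
/- Let K be a field, L a Lie algebra over K, and U(L) its universal enveloping algebra with canonical map ι : L → U(L). Let x ∈ L be such that the adjoint endomorphism ad x : L → L, y ↦ ⁅x, y⁆, is nilpotent. Then the inner derivation D of U(L) defined by D(u) = ι(x) * u − u * ι(x) is locally nilpotent: for every u ∈ U(L) there exists N such that D^N(u) = 0. -/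
/-!
`D = ad(ι x)` is a derivation of `U(L)`, so by the Leibniz rule the elements on which `D` is
locally nilpotent form a subalgebra. Since `D ∘ ι = ι ∘ ad x`, this subalgebra contains `ι(L)`,
which generates `U(L)`.
-/

namespace LinearMap

variable {R A : Type*} [CommSemiring R] [Ring A] [Algebra R A]

theorem mulLeft_sub_mulRight_apply_mul (a u v : A) :
    (mulLeft R a - mulRight R a) (u * v) =
      (mulLeft R a - mulRight R a) u * v + u * (mulLeft R a - mulRight R a) v := by
  simp only [sub_apply, mulLeft_apply, mulRight_apply]
  noncomm_ring

section Leibniz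

variable {D : A →ₗ[R] A} (hD : ∀ u v, D (u * v) = D u * v + u * D v)
include hD

theorem map_one_eq_zero_of_leibniz : D 1 = 0 := by
  simpa using hD 1 1

theorem pow_apply_mul_eq_zero_of_leibniz {m n : ℕ} {u v : A}
    (hu : (D ^ m) u = 0) (hv : (D ^ n) v = 0) : (D ^ (m + n)) (u * v) = 0 := by
  induction m generalizing u n v with
  | zero => simp_all
  | succ m ihm =>
    induction n generalizing v with
    | zero => simp_all
    | succ n ihn =>
      have hDu : (D ^ m) (D u) = 0 := by rwa [← Module.End.mul_apply, ← pow_succ]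
      have hDv : (D ^ n) (D v) = 0 := by rwa [← Module.End.mul_apply, ← pow_succ]
      have h₁ : (D ^ (m + n + 1)) (D u * v) = 0 := ihm hDu hv
      have h₂ : (D ^ (m + n + 1)) (u * D v) = 0 := by rw [Nat.add_right_comm]; exact ihn hDv
      rw [show m + 1 + (n + 1) = m + n + 1 + 1 by omega, pow_succ, Module.End.mul_apply, hD,
        map_add, h₁, h₂, add_zero]

def locallyNilpotentSubalgebra : Subalgebra R A where
  carrier := {u | ∃ n, (D ^ n) u = 0}
  mul_mem' := fun ⟨m, hu⟩ ⟨n, hv⟩ => ⟨m + n, pow_apply_mul_eq_zero_of_leibniz hD hu hv⟩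
  add_mem' := fun {u v} ⟨m, hu⟩ ⟨n, hv⟩ =>
    ⟨max m n, by
      rw [map_add, Module.End.pow_map_zero_of_le (le_max_left m n) hu,
        Module.End.pow_map_zero_of_le (le_max_right m n) hv, add_zero]⟩
  algebraMap_mem' r :=
    ⟨1, by rw [pow_one, Algebra.algebraMap_eq_smul_one, map_smul, map_one_eq_zero_of_leibniz hD,
      smul_zero]⟩

theorem mem_locallyNilpotentSubalgebra {u : A} :
    u ∈ locallyNilpotentSubalgebra hD ↔ ∃ n, (D ^ n) u = 0 :=
  Iff.rfl

end Leibniz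

end LinearMap

namespace UniversalEnvelopingAlgebra

attribute [local instance] LieRing.ofAssociativeRing

variable {R L : Type*} [CommRing R] [LieRing L] [LieAlgebra R L]

theorem mkAlgHom_surjective : Function.Surjective (mkAlgHom R L) :=
  RingCon.mkₐ_surjective _

theorem adjoin_range_ι : Algebra.adjoin R (Set.range (ι R (L := L))) = ⊤ := by
  rw [← (AlgHom.range_eq_top _).mpr mkAlgHom_surjective,
    ← Algebra.map_top, ← TensorAlgebra.adjoin_range_ι, AlgHom.map_adjoin, ← Set.range_comp]
  rfl

theorem mulLeft_sub_mulRight_pow_ι (x y : L) (k : ℕ) :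
    ((LinearMap.mulLeft R (ι R x) - LinearMap.mulRight R (ι R x)) ^ k) (ι R y) =
      ι R ((LieAlgebra.ad R L x ^ k) y) := by
  have h : (LinearMap.mulLeft R (ι R x) - LinearMap.mulRight R (ι R x)).comp (ι R).toLinearMap =
      (ι R).toLinearMap.comp (LieAlgebra.ad R L x) := by
    ext y
    simp [Ring.lie_def]
  exact LinearMap.congr_fun (Module.End.commute_pow_left_of_commute h k) y

end UniversalEnvelopingAlgebra

/-- If `ad x` is nilpotent on `L`, then the inner derivation
`u ↦ ι(x) * u - u * ι(x)` of the universal enveloping algebra is locally nilpotent. -/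
theorem innerDerivation_locallyNilpotent_of_ad_nilpotent
    {K L : Type*} [Field K] [LieRing L] [LieAlgebra K L]
    (x : L) (hx : IsNilpotent (LieAlgebra.ad K L x)) :
    ∀ u : UniversalEnvelopingAlgebra K L, ∃ N : ℕ,
      ((LinearMap.mulLeft K (UniversalEnvelopingAlgebra.ι K x) -
        LinearMap.mulRight K (UniversalEnvelopingAlgebra.ι K x)) ^ N) u = 0 := by
  obtain ⟨n, hn⟩ := hx
  have hD := LinearMap.mulLeft_sub_mulRight_apply_mul (R := K) (UniversalEnvelopingAlgebra.ι K x)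
  have hι : Set.range (UniversalEnvelopingAlgebra.ι K (L := L)) ⊆
      LinearMap.locallyNilpotentSubalgebra hD := by
    rintro _ ⟨y, rfl⟩
    refine (LinearMap.mem_locallyNilpotentSubalgebra hD).mpr ⟨n, ?_⟩
    rw [UniversalEnvelopingAlgebra.mulLeft_sub_mulRight_pow_ι, hn, LinearMap.zero_apply, map_zero]
  intro u
  have hu : u ∈ Algebra.adjoin K (Set.range (UniversalEnvelopingAlgebra.ι K (L := L))) :=
    by rw [UniversalEnvelopingAlgebra.adjoin_range_ι]; exact Algebra.mem_top
  exact (LinearMap.mem_locallyNilpotentSubalgebra hD).mp (Algebra.adjoin_le hι hu)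
end

section
/- Let K be a field, σ a finite type, A = MvPolynomial σ K the polynomial algebra in variables indexed by σ, and V ⊆ A the K-span of the variables (the homogeneous linear forms). Let L be a Lie algebra over K and D : L → Der_K(A) a Lie algebra homomorphism (so D⁅x, y⁆ = D x ∘ D y − D y ∘ D x) such that each derivation D x maps V into V. Suppose p, q ∈ A with q ≠ 0 satisfy (D x p) * q = p * (D x q) for all x ∈ L (i.e. the rational function p/q is L-invariant). Then there exist a K-linear map λ : L → K and polynomials p', q' ∈ A with q' ≠ 0 such that p * q' = q * p', and D x p' = λ(x) • p' and D x q' = λ(x) • q' for all x ∈ L (i.e. p/q is a quotient of two λ-semi-invariants of the same weight λ). -/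
/-!
Write `p / q` in lowest terms `p' / q'`; invariance survives cancelling the common factor, so
`D x p' * q' = p' * D x q'`. As `q'` is coprime to `p'`, it divides `D x q'`. Since `D x` maps
linear forms to linear forms it does not raise the total degree, so the quotient is a constant
`λ(x)`, which is linear in `x`. Cancelling `q'` then gives `D x p' = λ(x) • p'`.
-/

open MvPolynomial

namespace MvPolynomial

variable {R σ : Type*} [CommSemiring R]

theorem totalDegree_le_one_of_mem_span_X {v : MvPolynomial σ R}
    (hv : v ∈ Submodule.span R (Set.range (X : σ → MvPolynomial σ R))) : v.totalDegree ≤ 1 := by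
  refine (mem_restrictTotalDegree σ 1 v).mp (Submodule.span_le.mpr ?_ hv)
  rintro _ ⟨i, rfl⟩
  exact (mem_restrictTotalDegree σ 1 _).mpr <|
    (totalDegree_monomial_le (R := R) (Finsupp.single i 1) 1).trans_eq
      (Finsupp.sum_single_index rfl)

theorem derivation_eq_mkDerivation (d : Derivation R (MvPolynomial σ R) (MvPolynomial σ R)) :
    d = mkDerivation R fun i => d (X i) :=
  derivation_ext fun i => by rw [mkDerivation_X]

theorem totalDegree_derivation_monomial_le
    (d : Derivation R (MvPolynomial σ R) (MvPolynomial σ R))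
    (hd : ∀ i, (d (X i)).totalDegree ≤ 1) (s : σ →₀ ℕ) (a : R) :
    (d (monomial s a)).totalDegree ≤ s.degree := by
  rw [derivation_eq_mkDerivation d, mkDerivation_monomial]
  refine (totalDegree_smul_le _ _).trans <| (totalDegree_finsetSum _ _).trans <|
    Finset.sup_le fun i hi => ?_
  have hs : s - Finsupp.single i 1 + Finsupp.single i 1 = s :=
    tsub_add_cancel_of_le (Finsupp.single_le_iff.mpr (Nat.one_le_iff_ne_zero.mpr
      (Finsupp.mem_support_iff.mp hi)))
  calc (monomial (s - Finsupp.single i 1) (s i : R) • d (X i)).totalDegree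
      ≤ (s - Finsupp.single i 1).degree + 1 :=
        (totalDegree_mul _ _).trans (add_le_add (totalDegree_monomial_le _ _) (hd i))
    _ = s.degree := by conv_rhs => rw [← hs, map_add, Finsupp.degree_single]

theorem totalDegree_derivation_le (d : Derivation R (MvPolynomial σ R) (MvPolynomial σ R))
    (hd : ∀ i, (d (X i)).totalDegree ≤ 1) (r : MvPolynomial σ R) :
    (d r).totalDegree ≤ r.totalDegree := by
  conv_lhs => rw [r.as_sum, map_sum]
  exact (totalDegree_finsetSum _ _).trans <| Finset.sup_le fun s hs =>
    (totalDegree_derivation_monomial_le d hd s _).trans (le_totalDegree hs)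

theorem mem_span_singleton_of_dvd_of_totalDegree_le [IsDomain R] {b f : MvPolynomial σ R}
    (hb : b ≠ 0) (hdvd : b ∣ f) (hdeg : f.totalDegree ≤ b.totalDegree) : f ∈ R ∙ b := by
  obtain ⟨e, rfl⟩ := hdvd
  rcases eq_or_ne e 0 with rfl | he
  · simp
  rw [totalDegree_mul_of_isDomain hb he] at hdeg
  refine Submodule.mem_span_singleton.mpr ⟨e.coeff 0, ?_⟩
  rw [smul_eq_C_mul, mul_comm, ← totalDegree_eq_zero_iff_eq_C.mp (by omega)]

end MvPolynomial

theorem Derivation.mul_eq_mul_iff_of_common_factor {R A : Type*} [CommRing R] [CommRing A]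
    [IsDomain A] [Algebra R A] (d : Derivation R A A) {g a b : A} (hg : g ≠ 0) :
    d (g * a) * (g * b) = g * a * d (g * b) ↔ d a * b = a * d b := by
  have hfactor : d (g * a) * (g * b) - g * a * d (g * b) = g ^ 2 * (d a * b - a * d b) := by
    simp only [Derivation.leibniz, smul_eq_mul]; ring
  rw [← sub_eq_zero, hfactor, mul_eq_zero, sub_eq_zero, or_iff_right (pow_ne_zero 2 hg)]

theorem LinearMap.exists_eq_smul_of_forall_mem_span_singleton {K V M : Type*} [Field K]
    [AddCommGroup V] [Module K V] [AddCommGroup M] [Module K M] (f : V →ₗ[K] M) {m : M}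
    (hm : m ≠ 0) (h : ∀ x, f x ∈ K ∙ m) : ∃ lam : V →ₗ[K] K, ∀ x, f x = lam x • m :=
  ⟨(LinearEquiv.toSpanNonzeroSingleton K M m hm).symm.toLinearMap ∘ₗ f.codRestrict _ h,
    fun x => by simp⟩

theorem invariant_rational_eq_quotient_of_semiInvariants_general
    {K σ L : Type*} [Field K] [LieRing L] [LieAlgebra K L]
    (D : L →ₗ⁅K⁆ Derivation K (MvPolynomial σ K) (MvPolynomial σ K))
    (hV : ∀ x : L,
      ∀ v ∈ Submodule.span K (Set.range (MvPolynomial.X : σ → MvPolynomial σ K)),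
        D x v ∈ Submodule.span K (Set.range (MvPolynomial.X : σ → MvPolynomial σ K)))
    (p q : MvPolynomial σ K) (hq : q ≠ 0)
    (hinv : ∀ x : L, (D x p) * q = p * (D x q)) :
    ∃ (lam : L →ₗ[K] K) (p' q' : MvPolynomial σ K), q' ≠ 0 ∧ p * q' = q * p' ∧
      ∀ x : L, D x p' = lam x • p' ∧ D x q' = lam x • q' := by
  obtain ⟨p', q', g, hcop, rfl, rfl⟩ := UniqueFactorizationMonoid.exists_reduced_factors' p q hq
  have hg : g ≠ 0 := left_ne_zero_of_mul hq
  have hq' : q' ≠ 0 := right_ne_zero_of_mul hq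
  have hinv' x : D x p' * q' = p' * D x q' :=
    ((D x).mul_eq_mul_iff_of_common_factor hg).mp (hinv x)
  have hweight x : D x q' ∈ K ∙ q' := by
    have hdvd : q' ∣ D x q' :=
      hcop.symm.dvd_of_dvd_mul_left (hinv' x ▸ dvd_mul_left q' (D x p'))
    exact mem_span_singleton_of_dvd_of_totalDegree_le hq' hdvd <|
      totalDegree_derivation_le _ (fun i => totalDegree_le_one_of_mem_span_X <|
        hV x _ (Submodule.subset_span ⟨i, rfl⟩)) q'
  let Dq' : L →ₗ[K] MvPolynomial σ K :=
    { toFun x := D x q', map_add' _ _ := by simp, map_smul' _ _ := by simp }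
  obtain ⟨lam, hlam⟩ : ∃ lam : L →ₗ[K] K, ∀ x, D x q' = lam x • q' :=
    Dq'.exists_eq_smul_of_forall_mem_span_singleton hq' hweight
  refine ⟨lam, p', q', hq', by ring, fun x => ⟨?_, hlam x⟩⟩
  refine mul_right_cancel₀ hq' ?_
  rw [hinv' x, hlam x, mul_smul_comm, smul_mul_assoc]

/-- Let `A = MvPolynomial σ K`, `V` the span of the variables, `L` a Lie algebra acting on
`A` by derivations preserving `V`.  Any `L`-invariant rational function `p/q` is a quotient
of two semi-invariant polynomials of the same weight `λ`. -/
theorem invariant_rational_eq_quotient_of_semiInvariants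
    {K σ L : Type*} [Field K] [Finite σ] [LieRing L] [LieAlgebra K L]
    (D : L →ₗ⁅K⁆ Derivation K (MvPolynomial σ K) (MvPolynomial σ K))
    (hV : ∀ x : L,
      ∀ v ∈ Submodule.span K (Set.range (MvPolynomial.X : σ → MvPolynomial σ K)),
        D x v ∈ Submodule.span K (Set.range (MvPolynomial.X : σ → MvPolynomial σ K)))
    (p q : MvPolynomial σ K) (hq : q ≠ 0)
    (hinv : ∀ x : L, (D x p) * q = p * (D x q)) :
    ∃ (lam : L →ₗ[K] K) (p' q' : MvPolynomial σ K), q' ≠ 0 ∧ p * q' = q * p' ∧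
      ∀ x : L, D x p' = lam x • p' ∧ D x q' = lam x • q' :=
  invariant_rational_eq_quotient_of_semiInvariants_general D hV p q hq hinv
end

section
/- Let K be a field, σ a finite type, A = MvPolynomial σ K, and V ⊆ A the K-span of the variables. Let D be a K-derivation of A such that D maps V into V and the restriction of D to V is a nilpotent linear endomorphism of V. Then D is locally nilpotent on A: for every p ∈ A there exists N such that D^N(p) = 0. -/
private lemma deriv_pow_add_apply {K A : Type*} [CommRing K] [CommRing A] [Algebra K A]
    (D : Derivation K A A) (m k : ℕ) (p : A) :
    ((D : A →ₗ[K] A) ^ (m + k)) p = ((D : A →ₗ[K] A) ^ m) (((D : A →ₗ[K] A) ^ k) p) := by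
  rw [pow_add, Module.End.mul_apply]

private lemma deriv_mul_nilp {K A : Type*} [CommRing K] [CommRing A] [Algebra K A]
    (D : Derivation K A A) :
    ∀ n a b : ℕ, ∀ p q : A, a + b = n → ((D : A →ₗ[K] A) ^ a) p = 0 →
      ((D : A →ₗ[K] A) ^ b) q = 0 → ((D : A →ₗ[K] A) ^ n) (p * q) = 0 := by
  intro n
  induction n using Nat.strong_induction_on with
  | _ n ih =>
    intro a b p q hab hp hq
    match a, b with
    | 0, b =>
      simp only [pow_zero, Module.End.one_apply] at hp
      subst hp
      simp
    | a, 0 =>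
      simp only [pow_zero, Module.End.one_apply] at hq
      subst hq
      simp
    | a' + 1, b' + 1 =>
      obtain ⟨n', rfl⟩ : ∃ n', n = n' + 1 := ⟨a' + b' + 1, by omega⟩
      have h1 : ((D : A →ₗ[K] A) ^ (n' + 1)) (p * q)
          = ((D : A →ₗ[K] A) ^ n') (D (p * q)) := by
        rw [pow_succ, Module.End.mul_apply]; rfl
      rw [h1, D.leibniz, smul_eq_mul, smul_eq_mul, map_add]
      have hDq : ((D : A →ₗ[K] A) ^ b') (D q) = 0 := by
        have := hq
        rw [pow_succ, Module.End.mul_apply] at this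
        exact this
      have hDp : ((D : A →ₗ[K] A) ^ a') (D p) = 0 := by
        have := hp
        rw [pow_succ, Module.End.mul_apply] at this
        exact this
      rw [ih n' (by omega) (a' + 1) b' p (D q) (by omega) hp hDq,
        ih n' (by omega) (b' + 1) a' q (D p) (by omega) hq hDp, add_zero]

/-- If a derivation `D` of `A = MvPolynomial σ K` preserves the span `V` of the variables
and is nilpotent on `V`, then `D` is locally nilpotent on `A`. -/
theorem derivation_locallyNilpotent_of_nilpotent_on_linear
    {K σ : Type*} [Field K] [Finite σ]
    (D : Derivation K (MvPolynomial σ K) (MvPolynomial σ K))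
    (hV : ∀ v ∈ Submodule.span K (Set.range (MvPolynomial.X : σ → MvPolynomial σ K)),
      D v ∈ Submodule.span K (Set.range (MvPolynomial.X : σ → MvPolynomial σ K)))
    (hnilV : ∃ N : ℕ,
      ∀ v ∈ Submodule.span K (Set.range (MvPolynomial.X : σ → MvPolynomial σ K)),
        ((D : MvPolynomial σ K →ₗ[K] MvPolynomial σ K) ^ N) v = 0) :
    ∀ p : MvPolynomial σ K, ∃ N : ℕ,
      ((D : MvPolynomial σ K →ₗ[K] MvPolynomial σ K) ^ N) p = 0 := by
  obtain ⟨N0, hN0⟩ := hnilV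
  intro p
  induction p using MvPolynomial.induction_on with
  | C a =>
    refine ⟨1, ?_⟩
    simp only [pow_one]
    have : (MvPolynomial.C a : MvPolynomial σ K) = algebraMap K _ a := rfl
    rw [this]
    exact D.map_algebraMap a
  | add p q hp hq =>
    obtain ⟨Np, hNp⟩ := hp
    obtain ⟨Nq, hNq⟩ := hq
    refine ⟨Np + Nq, ?_⟩
    have e1 : ((D : MvPolynomial σ K →ₗ[K] MvPolynomial σ K) ^ (Np + Nq)) p = 0 := by
      rw [add_comm, deriv_pow_add_apply D Nq Np, hNp, map_zero]
    have e2 : ((D : MvPolynomial σ K →ₗ[K] MvPolynomial σ K) ^ (Np + Nq)) q = 0 := by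
      rw [deriv_pow_add_apply D Np Nq, hNq, map_zero]
    rw [map_add, e1, e2, add_zero]
  | mul_X p i hp =>
    obtain ⟨Np, hNp⟩ := hp
    have hX : ((D : MvPolynomial σ K →ₗ[K] MvPolynomial σ K) ^ N0) (MvPolynomial.X i) = 0 :=
      hN0 _ (Submodule.subset_span ⟨i, rfl⟩)
    exact ⟨Np + N0, deriv_mul_nilp D _ Np N0 p (MvPolynomial.X i) rfl hNp hX⟩
end
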